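/- Under the same definitions (φ as in the FASA drift, with ν > 0, integer k_m ≥ 2, η > 0), the function φ(ρ) is strictly increasing on (0, ∞); moreover φ(ρ) < 0 for 0 < ρ < 1 and φ(ρ) > 0 for ρ > 1. -/

import Mathlib

noncomputable def mu (ν q : ℝ) (km : ℕ) : ℝ :=
  ∑ k ∈ Finset.Icc 1 (km - 1), (k : ℝ) ^ ν * q ^ (k - 1) * (1 - q)
    + (km : ℝ) ^ ν * q ^ (km - 1)

noncomputable def q0 (ρ : ℝ) : ℝ := Real.exp (-ρ)
noncomputable def qc (ρ : ℝ) : ℝ := 1 - Real.exp (-ρ) - ρ * Real.exp (-ρ)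

noncomputable def q0star : ℝ := Real.exp (-1)
noncomputable def qcstar : ℝ := 1 - 2 * Real.exp (-1)

noncomputable def h0 (η ν : ℝ) (km : ℕ) : ℝ := η / (q0star * mu ν q0star km)
noncomputable def hc (η ν : ℝ) (km : ℕ) : ℝ := η / (qcstar * mu ν qcstar km)

/-- Approximate one-slot drift of the estimate in FASA. -/
noncomputable def φdrift (η ν : ℝ) (km : ℕ) (ρ : ℝ) : ℝ :=
  - q0 ρ * (1 + h0 η ν km * mu ν (q0 ρ) km)
    + qc ρ * (1 / (Real.exp 1 - 2) + hc η ν km * mu ν (qc ρ) km)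

lemma mu_eq_aux (ν q : ℝ) (m : ℕ) :
    mu ν q (m + 2) = 1 + ∑ k ∈ Finset.Icc 2 (m + 2),
      ((k : ℝ) ^ ν - ((k - 1 : ℕ) : ℝ) ^ ν) * q ^ (k - 1) := by
  induction m with
  | zero =>
      simp [mu, Finset.Icc_self, Real.one_rpow]
      ring
  | succ n ih =>
      have h1 : (n + 1 + 2) - 1 = (n + 1) + 1 := rfl
      have h2 : (n + 2) - 1 = n + 1 := rfl
      rw [mu, h1, Finset.sum_Icc_succ_top (by omega : 1 ≤ n + 1 + 1)]
      rw [mu, h2] at ih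
      rw [show n + 1 + 2 = (n + 2) + 1 from rfl,
        Finset.sum_Icc_succ_top (by omega : 2 ≤ (n + 2) + 1)]
      push_cast at ih ⊢
      rw [show ((n : ℝ) + 1 + 1) = (n : ℝ) + 2 by ring,
        show ((n : ℝ) + 2 + 1) = (n : ℝ) + 3 by ring] at *
      linear_combination ih

lemma mu_eq (ν q : ℝ) {km : ℕ} (hkm : 2 ≤ km) :
    mu ν q km = 1 + ∑ k ∈ Finset.Icc 2 km,
      ((k : ℝ) ^ ν - ((k - 1 : ℕ) : ℝ) ^ ν) * q ^ (k - 1) := by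
  obtain ⟨m, rfl⟩ : ∃ m, km = m + 2 := ⟨km - 2, by omega⟩
  exact mu_eq_aux ν q m

lemma coef_nonneg {ν : ℝ} (hν : 0 < ν) (k : ℕ) :
    0 ≤ (k : ℝ) ^ ν - ((k - 1 : ℕ) : ℝ) ^ ν :=
  sub_nonneg.mpr (Real.rpow_le_rpow (by positivity)
    (by exact_mod_cast Nat.sub_le k 1) hν.le)

lemma mu_ge_one {ν : ℝ} (hν : 0 < ν) {q : ℝ} (hq : 0 ≤ q) {km : ℕ} (hkm : 2 ≤ km) :
    1 ≤ mu ν q km := by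
  rw [mu_eq ν q hkm]
  have : 0 ≤ ∑ k ∈ Finset.Icc 2 km,
      ((k : ℝ) ^ ν - ((k - 1 : ℕ) : ℝ) ^ ν) * q ^ (k - 1) :=
    Finset.sum_nonneg fun k _ => mul_nonneg (coef_nonneg hν k) (by positivity)
  linarith

lemma mu_mono {ν : ℝ} (hν : 0 < ν) {km : ℕ} (hkm : 2 ≤ km) {x y : ℝ}
    (hx : 0 ≤ x) (hxy : x ≤ y) : mu ν x km ≤ mu ν y km := by
  rw [mu_eq ν x hkm, mu_eq ν y hkm]
  refine add_le_add le_rfl (Finset.sum_le_sum fun k _ => ?_)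
  exact mul_le_mul_of_nonneg_left (pow_le_pow_left₀ hx hxy _) (coef_nonneg hν k)

lemma key_lt {ν : ℝ} (hν : 0 < ν) {km : ℕ} (hkm : 2 ≤ km) {c d x y : ℝ}
    (hc : 0 < c) (hd : 0 ≤ d) (hx : 0 ≤ x) (hxy : x < y) :
    x * (d + c * mu ν x km) < y * (d + c * mu ν y km) := by
  have hy : 0 ≤ y := hx.trans hxy.le
  have h1 := mu_ge_one hν hx hkm
  have h2 := mu_ge_one hν hy hkm
  have h3 := mu_mono hν hkm hx hxy.le
  nlinarith [mul_nonneg hx (mul_nonneg hc.le (sub_nonneg.mpr h3)),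
    mul_pos (sub_pos.mpr hxy) (show 0 < d + c * mu ν y km by nlinarith)]

lemma exp_one_gt_two : (2 : ℝ) < Real.exp 1 := by
  have := Real.exp_one_gt_d9
  norm_num at this ⊢
  linarith

lemma qcstar_pos : 0 < qcstar := by
  have he := exp_one_gt_two
  have h1 : Real.exp 1 * Real.exp (-1) = 1 := by
    rw [← Real.exp_add]; norm_num
  have h2 : 0 < Real.exp (-1) := Real.exp_pos _
  unfold qcstar
  nlinarith

lemma h0_pos {η ν : ℝ} (hη : 0 < η) (hν : 0 < ν) {km : ℕ} (hkm : 2 ≤ km) :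
    0 < h0 η ν km :=
  div_pos hη (mul_pos (Real.exp_pos _)
    (lt_of_lt_of_le one_pos (mu_ge_one hν (Real.exp_pos _).le hkm)))

lemma hc_pos {η ν : ℝ} (hη : 0 < η) (hν : 0 < ν) {km : ℕ} (hkm : 2 ≤ km) :
    0 < hc η ν km :=
  div_pos hη (mul_pos qcstar_pos
    (lt_of_lt_of_le one_pos (mu_ge_one hν qcstar_pos.le hkm)))

lemma phi_one {η ν : ℝ} (hη : 0 < η) (hν : 0 < ν) {km : ℕ} (hkm : 2 ≤ km) :
    φdrift η ν km 1 = 0 := by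
  have hq0 : q0 1 = q0star := rfl
  have hqc : qc 1 = qcstar := by unfold qc qcstar; push_cast; ring
  have hM0 : (0:ℝ) < mu ν q0star km :=
    lt_of_lt_of_le one_pos (mu_ge_one hν (Real.exp_pos _).le hkm)
  have hMc : (0:ℝ) < mu ν qcstar km :=
    lt_of_lt_of_le one_pos (mu_ge_one hν qcstar_pos.le hkm)
  have he : (0:ℝ) < Real.exp 1 := Real.exp_pos 1
  have he2 : Real.exp 1 - 2 ≠ 0 := by have := exp_one_gt_two; linarith
  have hq0s : q0star ≠ 0 := (Real.exp_pos _).ne'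
  have hqcs : qcstar ≠ 0 := qcstar_pos.ne'
  have hstar : q0star = (Real.exp 1)⁻¹ := by
    unfold q0star; rw [← Real.exp_neg]
  unfold φdrift h0 hc
  rw [hq0, hqc]
  have hq : qcstar = 1 - 2 * (Real.exp 1)⁻¹ := by
    unfold qcstar; rw [← Real.exp_neg]
  field_simp
  rw [hstar, hq]
  field_simp
  ring


/-- The FASA drift φ is strictly increasing on (0,∞), negative on (0,1), positive on (1,∞). -/
theorem fasa_drift_strictMono (η ν : ℝ) (hη : 0 < η) (hν : 0 < ν) (km : ℕ) (hkm : 2 ≤ km) :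
    StrictMonoOn (φdrift η ν km) (Set.Ioi (0 : ℝ)) ∧
      (∀ ρ : ℝ, 0 < ρ → ρ < 1 → φdrift η ν km ρ < 0) ∧
      (∀ ρ : ℝ, 1 < ρ → 0 < φdrift η ν km ρ) := by
  have hd : (0:ℝ) ≤ 1 / (Real.exp 1 - 2) := by
    have h : (0:ℝ) < Real.exp 1 - 2 := by linarith [exp_one_gt_two]
    positivity
  have hmono : StrictMonoOn (φdrift η ν km) (Set.Ioi (0 : ℝ)) := by
    intro a ha b hb hab
    simp only [Set.mem_Ioi] at ha hb
    have hq0ab : q0 b < q0 a := Real.exp_lt_exp.mpr (by linarith)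
    have hq0b : 0 ≤ q0 b := (Real.exp_pos _).le
    -- qc a < qc b
    have hea : 0 < Real.exp (-a) := Real.exp_pos _
    have heb : 0 < Real.exp (-b) := Real.exp_pos _
    have hprod : Real.exp (b - a) * Real.exp (-b) = Real.exp (-a) := by
      rw [← Real.exp_add]; ring_nf
    have hexp1 : (b - a) + 1 < Real.exp (b - a) :=
      Real.add_one_lt_exp (by linarith)
    have hqcab : qc a < qc b := by
      unfold qc
      nlinarith [mul_pos (show (0:ℝ) < 1 + a by linarith) heb,
        mul_pos (mul_pos ha (show (0:ℝ) < b - a by linarith)) heb]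
    have hqca : 0 ≤ qc a := by
      have h1 : a + 1 < Real.exp a := Real.add_one_lt_exp ha.ne'
      have h2 : Real.exp a * Real.exp (-a) = 1 := by
        rw [← Real.exp_add]; norm_num
      unfold qc
      nlinarith
    have T1 := key_lt hν hkm (h0_pos hη hν hkm) (le_refl 0 |>.trans zero_le_one)
      hq0b hq0ab
    have T2 := key_lt hν hkm (hc_pos hη hν hkm) hd hqca hqcab
    unfold φdrift
    linarith
  refine ⟨hmono, fun ρ h1 h2 => ?_, fun ρ h1 => ?_⟩
  · have := hmono (Set.mem_Ioi.mpr h1) (Set.mem_Ioi.mpr one_pos) h2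
    rw [phi_one hη hν hkm] at this
    exact this
  · have := hmono (Set.mem_Ioi.mpr one_pos) (Set.mem_Ioi.mpr (lt_trans one_pos h1)) h1
    rw [phi_one hη hν hkm] at this
    exact this
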